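/- arXiv:1504.02989 — 2 statements merged into one kernel-verified Lean document; each statement's English description precedes it below -/
import Mathlib

section
/- Let n ≥ 1 and m = (m_1,…,m_n) ∈ ℝ^n with m_0 := 1. For k ≥ 0 let H(k) be the (k+1)×(k+1) matrix with entries H(k)_{il} = 0 if i > l and H(k)_{il} = (−1)^{l−i}·binom(l,i) if i ≤ l (0 ≤ i,l ≤ k), and let A(k) = (m_{i+j})_{i,j=0}^k and B(k) = (m_{i+j+1})_{i,j=0}^k be the Hankel matrices of m. For j = 2k define D_j := (H(k)ᵀA(k) + A(k)H(k))/2, and for j = 2k+1 define D_j := (H(k)ᵀB(k) + B(k)H(k))/2. If D_j is positive definite for every j = 1,…,n, then m is realizable on ℕ₀, and in fact I-realizable. -/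
open Polynomial

/-- `Lf P m = Σ_k p_k m_k`, the affine form associated to a polynomial `P`. -/
noncomputable def Lf (P : Polynomial ℝ) (m : ℕ → ℝ) : ℝ := P.sum fun k a => a * m k

/-- `𝒫_j`: monic real polynomials of degree `j` with `j` distinct roots in `ℕ₀`,
nonnegative on `ℕ₀`. -/
def PolyP (j : ℕ) (P : Polynomial ℝ) : Prop :=
  P.Monic ∧ P.natDegree = j ∧
    (∃ S : Finset ℕ, S.card = j ∧ P = ∏ a ∈ S, (X - C (a : ℝ))) ∧
    ∀ x : ℕ, 0 ≤ P.eval (x : ℝ)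

/-- `(m_1,…,m_j)` (with `m 0 = 1`) is realizable on `ℕ₀`: there is a probability
measure on the nonnegative integers whose `k`-th moment is `m k` for `k ≤ j`. -/
def RealizableN0 (j : ℕ) (m : ℕ → ℝ) : Prop :=
  ∃ μ : ℕ → ℝ, (∀ x, 0 ≤ μ x) ∧
    ∀ k, k ≤ j → HasSum (fun x : ℕ => (x : ℝ) ^ k * μ x) (m k)

/-- I-realizability on `ℕ₀`. -/
def IRealizable (j : ℕ) (m : ℕ → ℝ) : Prop :=
  RealizableN0 j m ∧ ∀ P : Polynomial ℝ, PolyP j P ∨ PolyP (j - 1) P → 0 < Lf P m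

/-- B-realizability on `ℕ₀`. -/
def BRealizable (j : ℕ) (m : ℕ → ℝ) : Prop :=
  RealizableN0 j m ∧ ∃ P : Polynomial ℝ, (PolyP j P ∨ PolyP (j - 1) P) ∧ Lf P m = 0

/-- The matrix `H(k)` with `H(k)_{il} = (-1)^{l-i} binom(l,i)` for `i ≤ l`,
and `0` otherwise. -/
noncomputable def Hmat (k : ℕ) : Matrix (Fin (k + 1)) (Fin (k + 1)) ℝ :=
  Matrix.of fun i l =>
    if (i : ℕ) ≤ (l : ℕ) then
      (-1 : ℝ) ^ ((l : ℕ) - (i : ℕ)) * ((l : ℕ).choose (i : ℕ) : ℝ)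
    else 0

/-- The Hankel matrix `A(k) = (m_{i+j})`. -/
noncomputable def Amat (m : ℕ → ℝ) (k : ℕ) : Matrix (Fin (k + 1)) (Fin (k + 1)) ℝ :=
  Matrix.of fun i j => m ((i : ℕ) + (j : ℕ))

/-- The Hankel matrix `B(k) = (m_{i+j+1})`. -/
noncomputable def Bmat (m : ℕ → ℝ) (k : ℕ) : Matrix (Fin (k + 1)) (Fin (k + 1)) ℝ :=
  Matrix.of fun i j => m ((i : ℕ) + (j : ℕ) + 1)

/-!
For `Q` of degree `≤ k` with coefficient vector `q`, `H(k)` maps `q` to the coefficients of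
`Q(x - 1)`, so `qᵀ D_{2k} q = L(Q(x) Q(x - 1))` and `qᵀ D_{2k+1} q = L(x Q(x) Q(x - 1))`.
Every polynomial of degree `≤ n` that is positive on `ℕ₀` is a nonnegative combination of such
products: factor it over `ℝ`; a negative root gives `x - r = x + (-r)`, while a pair of complex
roots, or two real roots in one interval `(k, k + 1)`, gives `(x - s)(x - s - 1) + ν` with
`ν ≥ 0`. Hence `L` is nonnegative on polynomials nonnegative on `ℕ₀`, and since positive
definiteness survives a small perturbation of `m`, it is even strictly positive there. By
Hahn–Banach, a strictly positive `L` puts `m` in the interior of the cone of moment vectors of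
finitely supported measures on `ℕ₀`.
-/

open Filter Topology Matrix

section MomentFunctional

variable (w : ℕ → ℝ)

noncomputable def momentFunctional : ℝ[X] →ₗ[ℝ] ℝ :=
  lsum fun k => LinearMap.id.smulRight (w k)

lemma Lf_add (P Q : ℝ[X]) : Lf (P + Q) w = Lf P w + Lf Q w :=
  map_add (momentFunctional w) P Q

lemma Lf_smul (c : ℝ) (P : ℝ[X]) : Lf (c • P) w = c * Lf P w :=
  map_smul (momentFunctional w) c P

lemma Lf_neg (P : ℝ[X]) : Lf (-P) w = -Lf P w :=
  map_neg (momentFunctional w) P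

lemma Lf_sum {ι : Type*} (s : Finset ι) (f : ι → ℝ[X]) :
    Lf (∑ i ∈ s, f i) w = ∑ i ∈ s, Lf (f i) w :=
  map_sum (momentFunctional w) f s

lemma Lf_monomial (k : ℕ) (a : ℝ) : Lf (monomial k a) w = a * w k :=
  sum_monomial_index a _ (zero_mul _)

lemma Lf_C (a : ℝ) : Lf (C a) w = a * w 0 :=
  Lf_monomial w 0 a

lemma Lf_X_mul (P : ℝ[X]) : Lf (X * P) w = Lf P (fun k => w (k + 1)) := by
  induction P using Polynomial.induction_on' with
  | add P Q hP hQ => rw [mul_add, Lf_add, Lf_add, hP, hQ]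
  | monomial k a => rw [X_mul_monomial, Lf_monomial, Lf_monomial]

lemma Lf_pow_eq_eval (P : ℝ[X]) (x : ℝ) : Lf P (fun k => x ^ k) = P.eval x :=
  (eval_eq_sum).symm

lemma Lf_sub_smul_right (P : ℝ[X]) (p : ℕ → ℝ) (δ : ℝ) :
    Lf P (w - δ • p) = Lf P w - δ * Lf P p := by
  simp only [Lf, Polynomial.sum_def, Finset.mul_sum, ← Finset.sum_sub_distrib]
  exact Finset.sum_congr rfl fun k _ => by
    simp only [Pi.sub_apply, Pi.smul_apply, smul_eq_mul]; ring

lemma Lf_coeff_pos {P : ℝ[X]} (hP : P ≠ 0) : 0 < Lf P fun k => P.coeff k := by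
  rw [Lf, Polynomial.sum_def]
  exact Finset.sum_pos (fun k hk => mul_self_pos.2 (mem_support_iff.1 hk))
    (nonempty_support_iff.2 hP)

end MomentFunctional

noncomputable def shiftSq (Q : ℝ[X]) : ℝ[X] := Q * Q.comp (X - 1)

lemma shiftSq_mul (Q R : ℝ[X]) : shiftSq (Q * R) = shiftSq Q * shiftSq R := by
  simp only [shiftSq, mul_comp]; ring

lemma shiftSq_X_mul (Q : ℝ[X]) : shiftSq (X * Q) = X * (X - 1) * shiftSq Q := by
  simp only [shiftSq, mul_comp, X_comp]; ring

lemma shiftSq_X_sub_C (s : ℝ) : shiftSq (X - C s) = (X - C s) * (X - C (s + 1)) := by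
  simp only [shiftSq, sub_comp, X_comp, C_comp, C_add, C_1]; ring

lemma shiftSq_one : shiftSq 1 = 1 := by simp [shiftSq]

inductive InShiftCone (d : ℕ) : ℝ[X] → Prop
  | shift (Q : ℝ[X]) : 2 * Q.natDegree ≤ d → InShiftCone d (shiftSq Q)
  | X_mul_shift (Q : ℝ[X]) : 2 * Q.natDegree + 1 ≤ d → InShiftCone d (X * shiftSq Q)
  | smul {c : ℝ} {P : ℝ[X]} : 0 ≤ c → InShiftCone d P → InShiftCone d (c • P)
  | add {P R : ℝ[X]} : InShiftCone d P → InShiftCone d R → InShiftCone d (P + R)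

namespace InShiftCone

variable {d d' : ℕ} {P R : ℝ[X]}

lemma C_of_nonneg {c : ℝ} (hc : 0 ≤ c) : InShiftCone d (C c) := by
  simpa [shiftSq_one, smul_eq_C_mul] using smul hc (shift (d := d) 1 (by simp))

lemma X_of_one_le (hd : 1 ≤ d) : InShiftCone d X := by
  simpa [shiftSq_one] using X_mul_shift 1 (by simpa using hd)

lemma mono (h : InShiftCone d P) (hdd : d ≤ d') : InShiftCone d' P := by
  induction h with
  | shift Q hQ => exact shift Q (hQ.trans hdd)
  | X_mul_shift Q hQ => exact X_mul_shift Q (hQ.trans hdd)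
  | smul hc _ ih => exact smul hc ih
  | add _ _ ih₁ ih₂ => exact add ih₁ ih₂

lemma mul_of_generators {e : ℕ} {G : ℝ[X]}
    (hshift : ∀ S : ℝ[X], 2 * S.natDegree ≤ d → InShiftCone e (G * shiftSq S))
    (hX : ∀ S : ℝ[X], 2 * S.natDegree + 1 ≤ d → InShiftCone e (G * (X * shiftSq S)))
    (hR : InShiftCone d R) : InShiftCone e (G * R) := by
  induction hR with
  | shift S hS => exact hshift S hS
  | X_mul_shift S hS => exact hX S hS
  | smul hc _ ih => rw [mul_smul_comm]; exact smul hc ih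
  | add _ _ ih₁ ih₂ => rw [mul_add]; exact add ih₁ ih₂

lemma mul (hP : InShiftCone d P) (hR : InShiftCone d' R) : InShiftCone (d + d') (P * R) := by
  have hdeg (Q S : ℝ[X]) : (Q * S).natDegree ≤ Q.natDegree + S.natDegree := natDegree_mul_le
  induction hP with
  | shift Q hQ =>
    refine mul_of_generators (fun S hS => ?_) (fun S hS => ?_) hR
    · rw [← shiftSq_mul]
      exact shift _ (by linarith [hdeg Q S])
    · rw [mul_left_comm, ← shiftSq_mul]
      exact X_mul_shift _ (by linarith [hdeg Q S])
  | X_mul_shift Q hQ =>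
    refine mul_of_generators (fun S hS => ?_) (fun S hS => ?_) hR
    · rw [mul_assoc, ← shiftSq_mul]
      exact X_mul_shift _ (by linarith [hdeg Q S])
    · -- `x² = x(x-1) + x` splits the product of two odd generators into two generators.
      have hsplit : X * shiftSq Q * (X * shiftSq S)
          = shiftSq (X * (Q * S)) + X * shiftSq (Q * S) := by
        rw [shiftSq_X_mul, shiftSq_mul]; ring
      have hXQS : (X * (Q * S)).natDegree ≤ 1 + (Q * S).natDegree :=
        natDegree_mul_le.trans (by rw [natDegree_X])
      rw [hsplit]
      exact add (shift _ (by linarith [hdeg Q S])) (X_mul_shift _ (by linarith [hdeg Q S]))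
  | smul hc _ ih => rw [smul_mul_assoc]; exact smul hc ih
  | add _ _ ih₁ ih₂ => rw [add_mul]; exact add ih₁ ih₂

lemma quadratic {b c : ℝ} (h : b ^ 2 ≤ 4 * c + 1) :
    InShiftCone 2 (X ^ 2 - C b * X + C c) := by
  obtain ⟨s, rfl⟩ : ∃ s, b = 2 * s + 1 := ⟨(b - 1) / 2, by ring⟩
  have hrepr : X ^ 2 - C (2 * s + 1) * X + C c = shiftSq (X - C s) + C (c - s * (s + 1)) := by
    rw [shiftSq_X_sub_C]
    simp only [map_add, map_mul, map_sub, map_one, map_ofNat]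
    ring
  rw [hrepr]
  exact add (shift _ (by rw [natDegree_X_sub_C])) (C_of_nonneg (by nlinarith))

end InShiftCone

def IsShiftConeFactor (q : ℝ[X]) : Prop :=
  q.Monic ∧ 0 < q.natDegree ∧ InShiftCone q.natDegree q ∧ ∀ x : ℕ, 0 < q.eval (x : ℝ)

lemma isShiftConeFactor_X_sub_C {r : ℝ} (hr : r < 0) : IsShiftConeFactor (X - C r) := by
  refine ⟨monic_X_sub_C r, by rw [natDegree_X_sub_C]; exact one_pos, ?_, fun x => ?_⟩
  · rw [natDegree_X_sub_C, sub_eq_add_neg, ← C_neg]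
    exact (InShiftCone.X_of_one_le le_rfl).add (InShiftCone.C_of_nonneg (by linarith))
  · simp only [eval_sub, eval_X, eval_C]
    linarith [(Nat.cast_nonneg x : (0 : ℝ) ≤ x)]

lemma isShiftConeFactor_quadratic {b c : ℝ} (h : b ^ 2 ≤ 4 * c + 1)
    (hpos : ∀ x : ℕ, 0 < (X ^ 2 - C b * X + C c).eval (x : ℝ)) :
    IsShiftConeFactor (X ^ 2 - C b * X + C c) := by
  have hdeg : (X ^ 2 - C b * X + C c).natDegree = 2 := by compute_degree!
  refine ⟨by monicity!, by omega, by rw [hdeg]; exact InShiftCone.quadratic h, hpos⟩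

lemma isShiftConeFactor_of_mem_Ioo {k : ℕ} {r r' : ℝ} (hr : r ∈ Set.Ioo (k : ℝ) (k + 1))
    (hr' : r' ∈ Set.Ioo (k : ℝ) (k + 1)) : IsShiftConeFactor ((X - C r) * (X - C r')) := by
  have hquad : (X - C r) * (X - C r') = X ^ 2 - C (r + r') * X + C (r * r') := by
    simp only [map_add, map_mul]; ring
  obtain ⟨hr₁, hr₂⟩ := hr
  obtain ⟨hr'₁, hr'₂⟩ := hr'
  rw [hquad]
  refine isShiftConeFactor_quadratic (by nlinarith) fun x => ?_
  rw [← hquad]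
  simp only [eval_mul, eval_sub, eval_X, eval_C]
  rcases le_or_gt x k with hx | hx
  · have hx' : (x : ℝ) ≤ k := by exact_mod_cast hx
    exact mul_pos_of_neg_of_neg (by linarith) (by linarith)
  · have hx' : (k : ℝ) + 1 ≤ x := by exact_mod_cast hx
    exact mul_pos (by linarith) (by linarith)

/-- `P / (X - r)` changes sign across the unit interval containing `r`, which yields the second
root. -/
lemma exists_mem_Ioo_of_isRoot {P : ℝ[X]} (hP : ∀ x : ℕ, 0 < P.eval (x : ℝ)) {r : ℝ}
    (hr : P.IsRoot r) (hr0 : 0 ≤ r) :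
    ∃ k : ℕ, ∃ r', r ∈ Set.Ioo (k : ℝ) (k + 1) ∧ r' ∈ Set.Ioo (k : ℝ) (k + 1) ∧
      (X - C r) * (X - C r') ∣ P := by
  obtain ⟨P₁, hP₁⟩ := dvd_iff_isRoot.2 hr
  set k := ⌊r⌋₊
  have hkr : (k : ℝ) < r := by
    refine (Nat.floor_le hr0).lt_of_ne fun h => ?_
    have := hP k
    rw [h, hr.eq_zero] at this
    exact this.false
  have hrk : r < k + 1 := Nat.lt_floor_add_one r
  have hev (x : ℝ) : P.eval x = (x - r) * P₁.eval x := by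
    rw [hP₁, eval_mul, eval_sub, eval_X, eval_C]
  have hk : P₁.eval (k : ℝ) < 0 := by
    have := hev k ▸ hP k
    nlinarith
  have hk1 : 0 < P₁.eval ((k : ℝ) + 1) := by
    have := hP (k + 1)
    push_cast at this
    rw [hev] at this
    nlinarith
  obtain ⟨r', hr'mem, hr'⟩ := intermediate_value_Ioo (by linarith) P₁.continuous.continuousOn
    (Set.mem_Ioo.2 ⟨hk, hk1⟩)
  obtain ⟨P₂, hP₂⟩ := dvd_iff_isRoot.2 hr'
  exact ⟨k, r', ⟨hkr, hrk⟩, hr'mem, P₂, by rw [hP₁, hP₂, mul_assoc]⟩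

lemma exists_isShiftConeFactor_dvd {P : ℝ[X]} (hP : ∀ x : ℕ, 0 < P.eval (x : ℝ))
    (hdeg : 0 < P.natDegree) : ∃ q, IsShiftConeFactor q ∧ q ∣ P := by
  obtain ⟨z, hz⟩ :=
    IsAlgClosed.exists_aeval_eq_zero ℂ P (natDegree_pos_iff_degree_pos.mp hdeg).ne'
  by_cases him : z.im = 0
  · have hr : P.IsRoot z.re := by
      have hzr : z = (z.re : ℂ) := Complex.ext rfl (by simpa using him)
      rw [hzr] at hz
      change aeval (algebraMap ℝ ℂ z.re) P = 0 at hz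
      rw [aeval_algebraMap_apply_eq_algebraMap_eval, map_eq_zero] at hz
      exact hz
    rcases lt_or_ge z.re 0 with hneg | hnonneg
    · exact ⟨_, isShiftConeFactor_X_sub_C hneg, dvd_iff_isRoot.2 hr⟩
    · obtain ⟨k, r', hr, hr', hdvd⟩ := exists_mem_Ioo_of_isRoot hP hr hnonneg
      exact ⟨_, isShiftConeFactor_of_mem_Ioo hr hr', hdvd⟩
  · have hnorm : ‖z‖ ^ 2 = z.re ^ 2 + z.im ^ 2 := by
      rw [Complex.sq_norm, Complex.normSq_apply]; ring
    refine ⟨_, isShiftConeFactor_quadratic (by nlinarith [sq_nonneg z.im]) fun x => ?_,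
      P.quadratic_dvd_of_aeval_eq_zero_im_ne_zero hz him⟩
    simp only [eval_add, eval_sub, eval_mul, eval_pow, eval_X, eval_C, hnorm]
    nlinarith [sq_nonneg ((x : ℝ) - z.re), sq_pos_of_ne_zero him]

theorem inShiftCone_natDegree_of_forall_pos {P : ℝ[X]} (hP : ∀ x : ℕ, 0 < P.eval (x : ℝ)) :
    InShiftCone P.natDegree P := by
  induction hn : P.natDegree using Nat.strong_induction_on generalizing P with
  | _ d ih =>
  rcases Nat.eq_zero_or_pos d with rfl | hd
  · rw [eq_C_of_natDegree_eq_zero hn]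
    exact InShiftCone.C_of_nonneg (by simpa [coeff_zero_eq_eval_zero] using (hP 0).le)
  obtain ⟨q, ⟨hmonic, hqdeg, hq, hqpos⟩, R, rfl⟩ := exists_isShiftConeFactor_dvd hP (hn ▸ hd)
  have hR0 : R ≠ 0 := by
    rintro rfl
    simp only [mul_zero, natDegree_zero] at hn
    omega
  have hRpos (x : ℕ) : 0 < R.eval (x : ℝ) :=
    pos_of_mul_pos_right (by simpa only [eval_mul] using hP x) (hqpos x).le
  rw [hmonic.natDegree_mul' hR0] at hn
  rw [← hn]
  exact hq.mul (ih _ (by omega) hRpos rfl)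

theorem inShiftCone_of_forall_pos {d : ℕ} {P : ℝ[X]} (hd : P.natDegree ≤ d)
    (hP : ∀ x : ℕ, 0 < P.eval (x : ℝ)) : InShiftCone d P :=
  (inShiftCone_natDegree_of_forall_pos hP).mono hd

section Nonneg

variable {n : ℕ} {w : ℕ → ℝ}

lemma InShiftCone.Lf_nonneg {P : ℝ[X]} (h : InShiftCone n P)
    (hshift : ∀ Q : ℝ[X], 2 * Q.natDegree ≤ n → 0 ≤ Lf (shiftSq Q) w)
    (hX : ∀ Q : ℝ[X], 2 * Q.natDegree + 1 ≤ n → 0 ≤ Lf (X * shiftSq Q) w) : 0 ≤ Lf P w := by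
  induction h with
  | shift Q hQ => exact hshift Q hQ
  | X_mul_shift Q hQ => exact hX Q hQ
  | smul hc _ ih => rw [Lf_smul]; exact mul_nonneg hc ih
  | add _ _ ih₁ ih₂ => rw [Lf_add]; exact add_nonneg ih₁ ih₂

theorem Lf_nonneg_of_shiftSq_nonneg
    (hshift : ∀ Q : ℝ[X], 2 * Q.natDegree ≤ n → 0 ≤ Lf (shiftSq Q) w)
    (hX : ∀ Q : ℝ[X], 2 * Q.natDegree + 1 ≤ n → 0 ≤ Lf (X * shiftSq Q) w)
    {P : ℝ[X]} (hPn : P.natDegree ≤ n) (hP : ∀ x : ℕ, 0 ≤ P.eval (x : ℝ)) : 0 ≤ Lf P w := by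
  have hε (ε : ℝ) (hε : 0 < ε) : 0 ≤ Lf P w + ε * w 0 := by
    rw [← Lf_C, ← Lf_add]
    refine (inShiftCone_of_forall_pos (by rwa [natDegree_add_C]) fun x => ?_).Lf_nonneg hshift hX
    rw [eval_add, eval_C]
    linarith [hP x]
  have hlim : Tendsto (fun ε => Lf P w + ε * w 0) (𝓝[>] 0) (𝓝 (Lf P w)) := by
    simpa using (((continuous_mul_const (w 0)).const_add (Lf P w)).tendsto 0).mono_left
      nhdsWithin_le_nhds
  exact ge_of_tendsto hlim (eventually_nhdsWithin_of_forall hε)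

end Nonneg

lemma dotProduct_half_transpose_mul_add_mulVec {ι : Type*} [Fintype ι] {G : Matrix ι ι ℝ}
    (hG : Gᵀ = G) (H : Matrix ι ι ℝ) (x : ι → ℝ) :
    x ⬝ᵥ (((1 : ℝ) / 2) • (Hᵀ * G + G * H)) *ᵥ x = x ⬝ᵥ G *ᵥ (H *ᵥ x) := by
  have hvec : x ᵥ* G = G *ᵥ x := by rw [← vecMul_transpose, hG]
  have hsymm : x ⬝ᵥ (Hᵀ * G) *ᵥ x = x ⬝ᵥ G *ᵥ (H *ᵥ x) := by
    rw [← mulVec_mulVec, dotProduct_mulVec, vecMul_transpose, dotProduct_mulVec x G, hvec,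
      dotProduct_comm]
  rw [smul_mulVec, dotProduct_smul, add_mulVec, dotProduct_add, hsymm, ← mulVec_mulVec,
    smul_eq_mul]
  ring

lemma Hmat_mulVec_coeff {k : ℕ} {Q : ℝ[X]} (hQ : Q.natDegree ≤ k) :
    Hmat k *ᵥ (fun i => Q.coeff i) = fun j : Fin (k + 1) => (Q.comp (X - 1)).coeff j := by
  ext j
  have htaylor : Q.comp (X - 1) = taylor (-1) Q := by
    rw [taylor_apply, map_neg, C_1, sub_eq_add_neg]
  rw [htaylor, taylor_coeff, hasseDeriv_apply, eval_sum,
    sum_over_range' _ (fun _ => by simp) (k + 1) (by omega), ← Fin.sum_univ_eq_sum_range,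
    mulVec, dotProduct]
  refine Finset.sum_congr rfl fun l _ => ?_
  simp only [Hmat, of_apply, eval_monomial]
  split_ifs with hjl
  · ring
  · rw [Nat.choose_eq_zero_of_lt (by omega)]
    simp

lemma dotProduct_Amat_mulVec (w : ℕ → ℝ) {k : ℕ} {P R : ℝ[X]} (hP : P.natDegree ≤ k)
    (hR : R.natDegree ≤ k) :
    (fun i : Fin (k + 1) => P.coeff i) ⬝ᵥ Amat w k *ᵥ (fun j => R.coeff j) = Lf (P * R) w := by
  conv_rhs => rw [P.as_sum_range' (k + 1) (by omega), R.as_sum_range' (k + 1) (by omega)]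
  rw [Finset.sum_mul_sum, Lf_sum, ← Fin.sum_univ_eq_sum_range]
  refine Finset.sum_congr rfl fun i _ => ?_
  rw [Lf_sum, ← Fin.sum_univ_eq_sum_range, mulVec, dotProduct, Finset.mul_sum]
  refine Finset.sum_congr rfl fun j _ => ?_
  rw [monomial_mul_monomial, Lf_monomial]
  simp only [Amat, of_apply]
  ring

noncomputable def Dmat (k : ℕ) (G : Matrix (Fin (k + 1)) (Fin (k + 1)) ℝ) :
    Matrix (Fin (k + 1)) (Fin (k + 1)) ℝ :=
  ((1 : ℝ) / 2) • (Matrix.transpose (Hmat k) * G + G * Hmat k)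

section Dmat

variable (w : ℕ → ℝ) {k : ℕ}

lemma dotProduct_Dmat_Amat_mulVec {Q : ℝ[X]} (hQ : Q.natDegree ≤ k) :
    (fun i : Fin (k + 1) => Q.coeff i) ⬝ᵥ Dmat k (Amat w k) *ᵥ (fun i => Q.coeff i)
      = Lf (shiftSq Q) w := by
  have hA : (Amat w k)ᵀ = Amat w k := by ext i j; simp [Amat, add_comm]
  have hcomp : (Q.comp (X - 1)).natDegree ≤ k :=
    natDegree_comp_le.trans (by rw [← C_1, natDegree_X_sub_C, mul_one]; exact hQ)
  rw [Dmat, dotProduct_half_transpose_mul_add_mulVec hA, Hmat_mulVec_coeff hQ,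
    dotProduct_Amat_mulVec w hQ hcomp, shiftSq]

lemma dotProduct_Dmat_Bmat_mulVec {Q : ℝ[X]} (hQ : Q.natDegree ≤ k) :
    (fun i : Fin (k + 1) => Q.coeff i) ⬝ᵥ Dmat k (Bmat w k) *ᵥ (fun i => Q.coeff i)
      = Lf (X * shiftSq Q) w := by
  rw [Lf_X_mul]
  exact dotProduct_Dmat_Amat_mulVec (fun t => w (t + 1)) hQ

lemma Dmat_Amat_sub_smul (p : ℕ → ℝ) (δ : ℝ) :
    Dmat k (Amat (w - δ • p) k) = Dmat k (Amat w k) - δ • Dmat k (Amat p k) := by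
  have hA : Amat (w - δ • p) k = Amat w k - δ • Amat p k := by ext i j; simp [Amat]
  simp only [Dmat, hA, Matrix.mul_sub, Matrix.sub_mul, Matrix.mul_smul, Matrix.smul_mul]
  module

lemma Dmat_Bmat_sub_smul (p : ℕ → ℝ) (δ : ℝ) :
    Dmat k (Bmat (w - δ • p) k) = Dmat k (Bmat w k) - δ • Dmat k (Bmat p k) :=
  Dmat_Amat_sub_smul (fun t => w (t + 1)) (fun t => p (t + 1)) δ

end Dmat

lemma Dmat_Amat_zero_eq_one {m : ℕ → ℝ} (hm0 : m 0 = 1) : Dmat 0 (Amat m 0) = 1 := by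
  ext i j
  fin_cases i; fin_cases j
  norm_num [Dmat, Hmat, Amat, hm0, Matrix.mul_apply]

lemma smul_dotProduct_mulVec_smul {ι : Type*} [Fintype ι] (A : Matrix ι ι ℝ) (c : ℝ)
    (u : ι → ℝ) : (c • u) ⬝ᵥ A *ᵥ (c • u) = c ^ 2 * (u ⬝ᵥ A *ᵥ u) := by
  rw [mulVec_smul, dotProduct_smul, smul_dotProduct, smul_eq_mul, smul_eq_mul]
  ring

/-- Compactness of the unit sphere makes the positivity margin uniform. -/
lemma Matrix.PosDef.eventually_dotProduct_sub_smul_mulVec_nonneg {ι : Type*} [Fintype ι]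
    {M : Matrix ι ι ℝ} (hM : M.PosDef) (N : Matrix ι ι ℝ) :
    ∀ᶠ δ in 𝓝 (0 : ℝ), ∀ x : ι → ℝ, 0 ≤ x ⬝ᵥ (M - δ • N) *ᵥ x := by
  have hcont : Continuous fun z : ℝ × (ι → ℝ) => z.2 ⬝ᵥ (M - z.1 • N) *ᵥ z.2 := by
    fun_prop
  have hsphere : ∀ᶠ δ in 𝓝 (0 : ℝ), ∀ u ∈ Metric.sphere (0 : ι → ℝ) 1,
      0 < u ⬝ᵥ (M - δ • N) *ᵥ u := by
    refine (isCompact_sphere 0 1).eventually_forall_of_forall_eventually fun u hu => ?_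
    have hu0 : u ≠ 0 := ne_zero_of_mem_unit_sphere ⟨u, hu⟩
    refine hcont.continuousAt.eventually (lt_mem_nhds ?_)
    simpa using hM.dotProduct_mulVec_pos hu0
  refine hsphere.mono fun δ hδ x => ?_
  rcases eq_or_ne x 0 with rfl | hx
  · simp
  have hxu : x = ‖x‖ • (‖x‖⁻¹ • x) := by
    rw [smul_smul, mul_inv_cancel₀ (norm_ne_zero_iff.2 hx), one_smul]
  rw [hxu, smul_dotProduct_mulVec_smul]
  refine mul_nonneg (sq_nonneg _) (hδ _ ?_).le
  rw [mem_sphere_zero_iff_norm, norm_smul, norm_inv, norm_norm,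
    inv_mul_cancel₀ (norm_ne_zero_iff.2 hx)]

theorem Lf_pos_of_posDef {n : ℕ} {m : ℕ → ℝ}
    (heven : ∀ k, 2 * k ≤ n → (Dmat k (Amat m k)).PosDef)
    (hodd : ∀ k, 2 * k + 1 ≤ n → (Dmat k (Bmat m k)).PosDef)
    {P : ℝ[X]} (hP0 : P ≠ 0) (hPn : P.natDegree ≤ n) (hP : ∀ x : ℕ, 0 ≤ P.eval (x : ℝ)) :
    0 < Lf P m := by
  -- Perturb `m` against the coefficients `p` of `P`: for small `δ > 0` the forms stay
  -- nonnegative, so `0 ≤ Lf P (m - δ p) = Lf P m - δ ∑ pₖ²`.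
  set p : ℕ → ℝ := fun k => P.coeff k
  have hforms : ∀ᶠ δ in 𝓝 (0 : ℝ), ∀ k ∈ Finset.range (n + 1),
      (2 * k ≤ n → ∀ x, 0 ≤ x ⬝ᵥ Dmat k (Amat (m - δ • p) k) *ᵥ x) ∧
      (2 * k + 1 ≤ n → ∀ x, 0 ≤ x ⬝ᵥ Dmat k (Bmat (m - δ • p) k) *ᵥ x) := by
    refine (eventually_all_finset _).2 fun k _ => Eventually.and ?_ ?_
    · by_cases hk : 2 * k ≤ n
      · refine ((heven k hk).eventually_dotProduct_sub_smul_mulVec_nonneg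
          (Dmat k (Amat p k))).mono fun δ hδ _ => ?_
        rwa [Dmat_Amat_sub_smul]
      · exact Eventually.of_forall fun _ h => absurd h hk
    · by_cases hk : 2 * k + 1 ≤ n
      · refine ((hodd k hk).eventually_dotProduct_sub_smul_mulVec_nonneg
          (Dmat k (Bmat p k))).mono fun δ hδ _ => ?_
        rwa [Dmat_Bmat_sub_smul]
      · exact Eventually.of_forall fun _ h => absurd h hk
  obtain ⟨δ, hδforms, hδ⟩ :=
    ((hforms.filter_mono nhdsWithin_le_nhds).and (self_mem_nhdsWithin (s := Set.Ioi 0))).exists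
  have hnonneg : 0 ≤ Lf P (m - δ • p) := by
    refine Lf_nonneg_of_shiftSq_nonneg (fun Q hQ => ?_) (fun Q hQ => ?_) hPn hP
    · rw [← dotProduct_Dmat_Amat_mulVec _ le_rfl]
      exact (hδforms Q.natDegree (Finset.mem_range.2 (by omega))).1 hQ _
    · rw [← dotProduct_Dmat_Bmat_mulVec _ le_rfl]
      exact (hδforms Q.natDegree (Finset.mem_range.2 (by omega))).2 hQ _
  rw [Lf_sub_smul_right] at hnonneg
  linarith [mul_pos (Set.mem_Ioi.1 hδ) (Lf_coeff_pos hP0)]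

lemma nonpos_of_forall_add_mul_lt {a b c : ℝ} (h : ∀ t > 0, a + t * b < c) : b ≤ 0 := by
  by_contra! hb
  have h1 := h 1 one_pos
  have h2 := h ((c - a) / b) (div_pos (by linarith) hb)
  rw [div_mul_cancel₀ _ hb.ne'] at h2
  linarith

lemma nonneg_of_forall_mul_lt {a c : ℝ} (h : ∀ t > 0, t * a < c) : 0 ≤ c := by
  by_contra! hc
  have ha : a < 0 := by linarith [h 1 one_pos]
  have h2 := h (c / a) (div_pos_of_neg_of_neg hc ha)
  rw [div_mul_cancel₀ _ ha.ne] at h2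
  linarith

namespace PointedCone

variable {E : Type*} [AddCommGroup E] [Module ℝ E] [TopologicalSpace E] (C : PointedCone ℝ E)

lemma add_mem_interior [IsTopologicalAddGroup E] {a b : E} (ha : a ∈ interior (C : Set E))
    (hb : b ∈ C) : a + b ∈ interior (C : Set E) :=
  interior_mono (Set.add_subset_iff.2 fun _ hx _ hy => C.add_mem hx hy)
    (subset_interior_add_left (Set.add_mem_add ha hb))

lemma smul_mem_interior [ContinuousConstSMul ℝ E] {t : ℝ} (ht : 0 < t) {a : E}
    (ha : a ∈ interior (C : Set E)) : t • a ∈ interior (C : Set E) := by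
  refine interior_mono (Set.smul_set_subset_iff.2 fun x hx => C.smul_mem ht.le hx) ?_
  rw [interior_smul₀ ht.ne']
  exact Set.smul_mem_smul_set ha

end PointedCone

section MomentCone

variable (n : ℕ)

def momentVec (x : ℕ) : Fin (n + 1) → ℝ := fun k => (x : ℝ) ^ (k : ℕ)

def momentCone : PointedCone ℝ (Fin (n + 1) → ℝ) :=
  PointedCone.hull ℝ (Set.range (momentVec n))

lemma momentVec_mem_momentCone (x : ℕ) : momentVec n x ∈ momentCone n :=
  PointedCone.subset_hull ⟨x, rfl⟩

/-- The moment vectors at the nodes `0, …, n` form a basis (Vandermonde), and the vectors with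
positive coordinates in that basis form a neighbourhood of their sum inside the cone. -/
lemma sum_momentVec_mem_interior :
    ∑ x ∈ Finset.range (n + 1), momentVec n x ∈
      interior (momentCone n : Set (Fin (n + 1) → ℝ)) := by
  set V := Matrix.vandermonde fun i : Fin (n + 1) => (i : ℝ)
  have hV : IsUnit V.det :=
    (det_vandermonde_ne_zero_iff.2 fun i j h => Fin.ext (by exact_mod_cast h)).isUnit
  have hrow (i : Fin (n + 1)) : V i = momentVec n i := rfl
  have hsum : ∑ x ∈ Finset.range (n + 1), momentVec n x = (fun _ => 1) ᵥ* V := by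
    simp [vecMul_eq_sum, hrow, ← Fin.sum_univ_eq_sum_range (momentVec n)]
  refine mem_interior.2 ⟨{v | ∀ i, 0 < (v ᵥ* V⁻¹) i}, fun v hv => ?_, ?_, ?_⟩
  · have hv' : v = ∑ i, (v ᵥ* V⁻¹) i • momentVec n i := by
      simp only [← hrow]
      rw [← vecMul_eq_sum, vecMul_vecMul, nonsing_inv_mul _ hV, vecMul_one]
    rw [hv']
    exact Submodule.sum_mem _ fun i _ =>
      (momentCone n).smul_mem (hv i).le (momentVec_mem_momentCone n i)
  · simp only [Set.ofPred_forall]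
    exact isOpen_iInter_of_finite fun i => isOpen_lt continuous_const (by fun_prop)
  · simp [hsum, vecMul_vecMul, mul_nonsing_inv _ hV]

lemma exists_Lf_eq_apply (f : (Fin (n + 1) → ℝ) →ₗ[ℝ] ℝ) :
    ∃ P : ℝ[X], P.natDegree ≤ n ∧ ∀ w : ℕ → ℝ, f (fun k => w k) = Lf P w := by
  refine ⟨∑ k : Fin (n + 1), monomial k (f fun j => if k = j then 1 else 0),
    natDegree_sum_le_of_forall_le _ _ fun k _ => (natDegree_monomial_le _).trans (by omega),
    fun w => ?_⟩
  rw [LinearMap.pi_apply_eq_sum_univ, Lf_sum]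
  exact Finset.sum_congr rfl fun k _ => by rw [Lf_monomial, smul_eq_mul, mul_comm]

theorem mem_interior_momentCone_of_Lf_pos {m : ℕ → ℝ}
    (hpos : ∀ P : ℝ[X], P ≠ 0 → P.natDegree ≤ n → (∀ x : ℕ, 0 ≤ P.eval (x : ℝ)) →
      0 < Lf P m) :
    (fun k : Fin (n + 1) => m k) ∈ interior (momentCone n : Set (Fin (n + 1) → ℝ)) := by
  by_contra hm
  set w₀ := ∑ x ∈ Finset.range (n + 1), momentVec n x
  have hw₀ := sum_momentVec_mem_interior n
  obtain ⟨f, hf⟩ := geometric_hahn_banach_open_point (momentCone n).convex.interior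
    isOpen_interior hm
  obtain ⟨P, hPn, hP⟩ := exists_Lf_eq_apply n (f : (Fin (n + 1) → ℝ) →ₗ[ℝ] ℝ)
  have hfm : f (fun k => m k) = Lf P m := hP m
  have hfvec (x : ℕ) : f (momentVec n x) = P.eval (x : ℝ) := by
    rw [← Lf_pow_eq_eval]
    exact hP _
  have hPx (x : ℕ) : P.eval (x : ℝ) ≤ 0 := by
    refine nonpos_of_forall_add_mul_lt (a := f w₀) (c := f fun k => m k) fun t ht => ?_
    have := hf _ ((momentCone n).add_mem_interior hw₀
      ((momentCone n).smul_mem ht.le (momentVec_mem_momentCone n x)))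
    rwa [map_add, map_smul, hfvec, smul_eq_mul] at this
  have hPm : 0 ≤ Lf P m := by
    refine nonneg_of_forall_mul_lt (a := f w₀) fun t ht => ?_
    have := hf _ ((momentCone n).smul_mem_interior ht hw₀)
    rwa [map_smul, smul_eq_mul, hfm] at this
  have hP0 : P = 0 := by
    by_contra hP0
    have := hpos (-P) (neg_ne_zero.2 hP0) (by rwa [natDegree_neg])
      fun x => by simpa using hPx x
    rw [Lf_neg] at this
    linarith
  subst hP0
  have := hf w₀ hw₀
  simp [w₀, hfvec, hfm, Lf] at this

theorem realizableN0_of_mem_momentCone {m : ℕ → ℝ}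
    (hm : (fun k : Fin (n + 1) => m k) ∈ momentCone n) : RealizableN0 n m := by
  obtain ⟨c, hc⟩ := Finsupp.mem_span_range_iff_exists_finsupp.1 hm
  refine ⟨fun x => c x, fun x => (c x).2, fun k hk => ?_⟩
  have hmk : m k = ∑ x ∈ c.support, (x : ℝ) ^ k * c x := by
    change m (⟨k, by omega⟩ : Fin (n + 1)) = _
    rw [← congrFun hc, Finsupp.sum, Finset.sum_apply]
    refine Finset.sum_congr rfl fun x _ => ?_
    simp [momentVec, ← Nonneg.coe_smul, mul_comm]
  rw [hmk]
  exact hasSum_sum_of_ne_finset_zero fun x hx => by simp [Finsupp.notMem_support_iff.1 hx]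

theorem realizableN0_of_Lf_pos {m : ℕ → ℝ}
    (hpos : ∀ P : ℝ[X], P ≠ 0 → P.natDegree ≤ n → (∀ x : ℕ, 0 ≤ P.eval (x : ℝ)) →
      0 < Lf P m) : RealizableN0 n m :=
  realizableN0_of_mem_momentCone n (interior_subset (mem_interior_momentCone_of_Lf_pos n hpos))

end MomentCone

theorem sufficient_condition_general (n : ℕ) (m : ℕ → ℝ) (hm0 : m 0 = 1)
    (heven : ∀ k : ℕ, 1 ≤ k → 2 * k ≤ n →
      (((1 : ℝ) / 2) • (Matrix.transpose (Hmat k) * Amat m k + Amat m k * Hmat k)).PosDef)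
    (hodd : ∀ k : ℕ, 2 * k + 1 ≤ n →
      (((1 : ℝ) / 2) • (Matrix.transpose (Hmat k) * Bmat m k + Bmat m k * Hmat k)).PosDef) :
    RealizableN0 n m ∧ IRealizable n m := by
  have heven' (k : ℕ) (hk : 2 * k ≤ n) : (Dmat k (Amat m k)).PosDef := by
    rcases Nat.eq_zero_or_pos k with rfl | hk0
    · rw [Dmat_Amat_zero_eq_one hm0]
      exact PosDef.one
    · exact heven k hk0 hk
  have hpos : ∀ P : ℝ[X], P ≠ 0 → P.natDegree ≤ n → (∀ x : ℕ, 0 ≤ P.eval (x : ℝ)) →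
      0 < Lf P m := fun _ => Lf_pos_of_posDef heven' hodd
  have hreal := realizableN0_of_Lf_pos n hpos
  refine ⟨hreal, hreal, fun P hP => ?_⟩
  rcases hP with ⟨hmonic, hdeg, -, hnonneg⟩ | ⟨hmonic, hdeg, -, hnonneg⟩
  · exact hpos P hmonic.ne_zero hdeg.le hnonneg
  · exact hpos P hmonic.ne_zero (by omega) hnonneg

/-- Theorem 7.1: if the matrices `D_j` (`D_{2k} = (H(k)ᵀA(k)+A(k)H(k))/2`,
`D_{2k+1} = (H(k)ᵀB(k)+B(k)H(k))/2`) are positive definite for `j = 1,…,n`,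
then `m` is realizable on `ℕ₀`, and in fact I-realizable. -/
theorem sufficient_condition (n : ℕ) (hn : 1 ≤ n) (m : ℕ → ℝ) (hm0 : m 0 = 1)
    (heven : ∀ k : ℕ, 1 ≤ k → 2 * k ≤ n →
      (((1 : ℝ) / 2) • (Matrix.transpose (Hmat k) * Amat m k + Amat m k * Hmat k)).PosDef)
    (hodd : ∀ k : ℕ, 2 * k + 1 ≤ n →
      (((1 : ℝ) / 2) • (Matrix.transpose (Hmat k) * Bmat m k + Bmat m k * Hmat k)).PosDef) :
    RealizableN0 n m ∧ IRealizable n m :=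
  sufficient_condition_general n m hm0 heven hodd
end

section
/- Let n ≥ 2 and m = (m_1,…,m_n) ∈ ℝ^n with m_0 := 1, and suppose L_P(m) ≥ 0 for all P ∈ 𝒫_n ∪ 𝒫_{n−1}. Then L_P(m) ≥ 0 for every P ∈ 𝒫_k and every k with 1 ≤ k ≤ n; moreover, if Q ∈ 𝒫_k with k ≤ n−2 satisfies L_Q(m) = 0, then L_{x^i Q}(m) = 0 for every i with 1 ≤ i ≤ n−1−k, where (x^i Q)(x) := x^i·Q(x). -/
/-!
Write `L` for the linear functional `P ↦ L_P(m)`. For `Q ∈ 𝒫_k` and even `e` with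
`k + e ∈ {n, n - 1}`, the polynomial `Q ∏_{j<e} (X - (N + j))` lies in `𝒫_{k+e}` as soon as `N`
exceeds the roots of `Q`, because a product of an even number of consecutive integers is
nonnegative. Hence `N ↦ L(Q ∏_{j<e} (X - N - j))` is a polynomial in `N` of degree at most `e`
that is nonnegative at all large integers. Its coefficient of `N^e` is `L(Q)`, so `L(Q) ≥ 0`;
if `L(Q) = 0`, its coefficient of `N^(e-1)` is `-e L(XQ)`, so `L(XQ) ≤ 0`. Adjoining to `Q` the
least natural number `r` that is not a root gives `(X - r) Q ∈ 𝒫_{k+1}`, whence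
`L(XQ) = L((X - r) Q) ≥ 0`. So `L((X - r) Q) = 0`, and `X^(i+1) Q = X^i (X - r) Q + r X^i Q`
propagates the vanishing to all admissible powers by induction on `i`.
-/

open Polynomial

open Finset Filter

noncomputable def lfLinearMap (m : ℕ → ℝ) : ℝ[X] →ₗ[ℝ] ℝ :=
  lsum fun k => LinearMap.toSpanSingleton ℝ ℝ (m k)

@[simp]
lemma lfLinearMap_apply (m : ℕ → ℝ) (P : ℝ[X]) : lfLinearMap m P = Lf P m := by
  simp [lfLinearMap, Lf, lsum_apply, LinearMap.toSpanSingleton_apply, smul_eq_mul]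

lemma descPochhammer_eval_intCast_nonneg {e : ℕ} (he : Even e) (z : ℤ) :
    0 ≤ (descPochhammer ℝ e).eval (z : ℝ) := by
  rcases le_or_gt 0 z with hz | hz
  · lift z to ℕ using hz
    rw [Int.cast_natCast, descPochhammer_eval_eq_descFactorial]
    positivity
  · have h := ascPochhammer_eval_neg_eq_descPochhammer ℝ (z : ℝ) e
    rw [he.neg_one_pow, one_mul] at h
    rw [← h]
    exact (ascPochhammer_pos e _ (by exact_mod_cast neg_pos.mpr hz)).le

lemma prod_Ico_sub_nonneg {e : ℕ} (he : Even e) (N x : ℕ) :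
    0 ≤ ∏ a ∈ Ico N (N + e), ((x : ℝ) - a) := by
  have h := descPochhammer_eval_intCast_nonneg he ((x : ℤ) - N)
  rw [descPochhammer_eval_eq_prod_range] at h
  rw [prod_Ico_eq_prod_range, Nat.add_sub_cancel_left]
  convert h using 2
  push_cast
  ring

lemma polyP_prod {S : Finset ℕ} (h : ∀ x : ℕ, 0 ≤ ∏ a ∈ S, ((x : ℝ) - a)) :
    PolyP S.card (∏ a ∈ S, (X - C (a : ℝ))) :=
  ⟨monic_prod_of_monic _ _ fun _ _ => monic_X_sub_C _, natDegree_finsetProd_X_sub_C_eq_card _ _,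
    ⟨S, rfl, rfl⟩, fun x => by simpa [eval_prod] using h x⟩

lemma PolyP.eventually_mul_prod_Ico {k e : ℕ} {Q : ℝ[X]} (hQ : PolyP k Q) (he : Even e) :
    ∀ᶠ N in atTop, PolyP (k + e) (Q * ∏ a ∈ Ico N (N + e), (X - C (a : ℝ))) := by
  obtain ⟨-, -, ⟨S, rfl, rfl⟩, hQnn⟩ := hQ
  filter_upwards [eventually_gt_atTop (S.sup id)] with N hN
  have hdisj : Disjoint S (Ico N (N + e)) := by
    refine disjoint_left.mpr fun a ha ha' => ?_
    have := le_sup (f := id) ha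
    simp only [mem_Ico, id_eq] at this ha'
    omega
  rw [← prod_union hdisj]
  convert polyP_prod fun x => ?_ using 1
  · rw [card_union_of_disjoint hdisj, Nat.card_Ico, Nat.add_sub_cancel_left]
  · rw [prod_union hdisj]
    refine mul_nonneg ?_ (prod_Ico_sub_nonneg he N x)
    simpa [eval_prod] using hQnn x

lemma PolyP.exists_X_sub_C_mul {k : ℕ} {Q : ℝ[X]} (hQ : PolyP k Q) :
    ∃ r : ℕ, PolyP (k + 1) ((X - C (r : ℝ)) * Q) := by
  obtain ⟨-, -, ⟨S, rfl, rfl⟩, hQnn⟩ := hQ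
  have hex : ∃ r : ℕ, r ∉ S := Infinite.exists_notMem_finset S
  have hr := Nat.find_spec hex
  refine ⟨Nat.find hex, ?_⟩
  convert polyP_prod (S := insert (Nat.find hex) S) fun x => ?_ using 1
  · rw [card_insert_of_notMem hr]
  · rw [prod_insert hr]
  rw [prod_insert hr]
  rcases lt_or_ge x (Nat.find hex) with hx | hx
  · rw [prod_eq_zero (not_not.mp (Nat.find_min hex hx)) (sub_self _), mul_zero]
  · exact mul_nonneg (sub_nonneg.mpr (by exact_mod_cast hx)) (by simpa [eval_prod] using hQnn x)

section MapCoeffs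

variable {R A : Type*} [CommSemiring R] [Semiring A] [Algebra R A]

noncomputable def mapCoeffs (L : A →ₗ[R] R) (B : A[X]) : R[X] :=
  B.sum fun t b => monomial t (L b)

lemma coeff_mapCoeffs (L : A →ₗ[R] R) (B : A[X]) (t : ℕ) :
    (mapCoeffs L B).coeff t = L (B.coeff t) := by
  rw [mapCoeffs, Polynomial.sum_def, finsetSum_coeff]
  simp only [coeff_monomial]
  rw [sum_ite_eq']
  split_ifs with ht
  · rfl
  · rw [notMem_support_iff.mp ht, map_zero]

lemma natDegree_mapCoeffs_le (L : A →ₗ[R] R) (B : A[X]) :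
    (mapCoeffs L B).natDegree ≤ B.natDegree :=
  natDegree_le_iff_coeff_eq_zero.mpr fun t ht => by
    rw [coeff_mapCoeffs, coeff_eq_zero_of_natDegree_lt ht, map_zero]

lemma eval_mapCoeffs (L : A →ₗ[R] R) (B : A[X]) (y : R) :
    (mapCoeffs L B).eval y = L (B.eval (algebraMap R A y)) := by
  rw [mapCoeffs, Polynomial.sum_def, eval_finsetSum, eval_eq_sum, Polynomial.sum_def, map_sum]
  refine sum_congr rfl fun t _ => ?_
  rw [eval_monomial, ← map_pow, ← Algebra.commutes, ← Algebra.smul_def, map_smul, smul_eq_mul,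
    mul_comm]

end MapCoeffs

section ShiftedProd

variable {R : Type*} [CommRing R]

/-- The outer variable is the shift `y`: evaluating at `C y` gives `Q * ∏_{j<e} (y + j - X)`. -/
noncomputable def shiftedProd (Q : R[X]) (e : ℕ) : R[X][X] :=
  C Q * ∏ j ∈ range e, (X - C (X - C (j : R)))

lemma natDegree_shiftedProd_le [Nontrivial R] (Q : R[X]) (e : ℕ) :
    (shiftedProd Q e).natDegree ≤ e :=
  (natDegree_C_mul_le _ _).trans (by rw [natDegree_finsetProd_X_sub_C_eq_card, card_range])

lemma coeff_shiftedProd_self [Nontrivial R] (Q : R[X]) (e : ℕ) :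
    (shiftedProd Q e).coeff e = Q := by
  have hmon : (∏ j ∈ range e, (X - C (X - C (j : R)))).Monic :=
    monic_prod_of_monic _ _ fun _ _ => monic_X_sub_C _
  have hlead := hmon.coeff_natDegree
  rw [natDegree_finsetProd_X_sub_C_eq_card, card_range] at hlead
  rw [shiftedProd, coeff_C_mul, hlead, mul_one]

lemma coeff_shiftedProd_pred (Q : R[X]) {e : ℕ} (he : 0 < e) :
    (shiftedProd Q e).coeff (e - 1) = -∑ j ∈ range e, (X - C (j : R)) * Q := by
  have h := prod_X_sub_C_coeff_card_pred (range e) (fun j => X - C (j : R)) (by simpa using he)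
  rw [card_range] at h
  rw [shiftedProd, coeff_C_mul, h, ← sum_mul, mul_neg, mul_comm]

lemma eval_shiftedProd_natCast (Q : R[X]) {e : ℕ} (he : Even e) (N : ℕ) :
    (shiftedProd Q e).eval (C (N : R)) = Q * ∏ a ∈ Ico N (N + e), (X - C (a : R)) := by
  have hneg := prod_neg (s := range e) fun j => (X - C ((N + j : ℕ) : R))
  rw [card_range, he.neg_one_pow, one_mul] at hneg
  rw [shiftedProd, eval_mul, eval_C, eval_prod, prod_Ico_eq_prod_range, Nat.add_sub_cancel_left,
    ← hneg]
  congr 1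
  refine prod_congr rfl fun j _ => ?_
  simp only [eval_sub, eval_X, eval_C, Nat.cast_add, C_add]
  ring

end ShiftedProd

lemma leadingCoeff_nonneg_of_eventually_nonneg {g : ℝ[X]}
    (h : ∀ᶠ N : ℕ in atTop, 0 ≤ g.eval (N : ℝ)) : 0 ≤ g.leadingCoeff := by
  by_contra! hg
  have hneg : ∀ᶠ N : ℕ in atTop, g.eval (N : ℝ) < 0 := by
    rcases le_or_gt g.degree 0 with hd | hd
    · rw [eq_C_of_degree_le_zero hd] at hg ⊢
      exact Eventually.of_forall fun _ => by simpa using hg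
    · exact ((g.tendsto_atBot_of_leadingCoeff_nonpos hd hg.le).comp
        tendsto_natCast_atTop_atTop).eventually (eventually_lt_atBot 0)
  obtain ⟨N, h₁, h₂⟩ := (h.and hneg).exists
  linarith

lemma coeff_nonneg_of_eventually_nonneg {g : ℝ[X]} {d : ℕ} (hd : g.natDegree ≤ d)
    (h : ∀ᶠ N : ℕ in atTop, 0 ≤ g.eval (N : ℝ)) : 0 ≤ g.coeff d := by
  rcases hd.lt_or_eq with hlt | rfl
  · rw [coeff_eq_zero_of_natDegree_lt hlt]
  · exact leadingCoeff_nonneg_of_eventually_nonneg h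

section Functional

variable (L : ℝ[X] →ₗ[ℝ] ℝ)

lemma map_X_sub_C_mul (r : ℝ) (Q : ℝ[X]) : L ((X - C r) * Q) = L (X * Q) - r * L Q := by
  rw [sub_mul, C_mul', map_sub, map_smul, smul_eq_mul]

variable {k e : ℕ} {Q : ℝ[X]}

lemma eventually_nonneg_eval_mapCoeffs_shiftedProd (hL : ∀ P, PolyP (k + e) P → 0 ≤ L P)
    (he : Even e) (hQ : PolyP k Q) :
    ∀ᶠ N : ℕ in atTop, 0 ≤ (mapCoeffs L (shiftedProd Q e)).eval (N : ℝ) := by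
  filter_upwards [hQ.eventually_mul_prod_Ico he] with N hN
  rw [eval_mapCoeffs, algebraMap_eq, eval_shiftedProd_natCast Q he N]
  exact hL _ hN

lemma nonneg_of_polyP_add_even (hL : ∀ P, PolyP (k + e) P → 0 ≤ L P) (he : Even e)
    (hQ : PolyP k Q) : 0 ≤ L Q := by
  have h := coeff_nonneg_of_eventually_nonneg
    ((natDegree_mapCoeffs_le _ _).trans (natDegree_shiftedProd_le Q e))
    (eventually_nonneg_eval_mapCoeffs_shiftedProd L hL he hQ)
  rwa [coeff_mapCoeffs, coeff_shiftedProd_self] at h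

lemma map_X_mul_nonpos_of_polyP_add_even (hL : ∀ P, PolyP (k + e) P → 0 ≤ L P) (he : Even e)
    (he₀ : e ≠ 0) (hQ : PolyP k Q) (hQ₀ : L Q = 0) : L (X * Q) ≤ 0 := by
  have hdeg : (mapCoeffs L (shiftedProd Q e)).natDegree ≤ e - 1 := by
    refine natDegree_le_pred ?_ (by rw [coeff_mapCoeffs, coeff_shiftedProd_self, hQ₀])
    exact (natDegree_mapCoeffs_le _ _).trans (natDegree_shiftedProd_le Q e)
  have h := coeff_nonneg_of_eventually_nonneg hdeg
    (eventually_nonneg_eval_mapCoeffs_shiftedProd L hL he hQ)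
  rw [coeff_mapCoeffs, coeff_shiftedProd_pred Q (Nat.pos_of_ne_zero he₀), map_neg, map_sum] at h
  simp only [map_X_sub_C_mul, hQ₀, mul_zero, sub_zero, sum_const, card_range, nsmul_eq_mul] at h
  exact nonpos_of_mul_nonpos_right (neg_nonneg.mp h) (by exact_mod_cast Nat.pos_of_ne_zero he₀)

variable {n : ℕ}

lemma exists_even_nonneg_of_le (hL : ∀ P, PolyP n P ∨ PolyP (n - 1) P → 0 ≤ L P) (hk : k ≤ n) :
    ∃ e, Even e ∧ (k + 2 ≤ n → e ≠ 0) ∧ ∀ P, PolyP (k + e) P → 0 ≤ L P := by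
  have hke : k + 2 * ((n - k) / 2) = n ∨ k + 2 * ((n - k) / 2) = n - 1 := by omega
  refine ⟨2 * ((n - k) / 2), even_two_mul _, by omega, fun P hP => hL P ?_⟩
  rcases hke with h | h <;> rw [h] at hP <;> simp [hP]

lemma nonneg_of_polyP_of_le (hL : ∀ P, PolyP n P ∨ PolyP (n - 1) P → 0 ≤ L P) (hk : k ≤ n)
    (hQ : PolyP k Q) : 0 ≤ L Q := by
  obtain ⟨e, he, -, hLe⟩ := exists_even_nonneg_of_le L hL hk
  exact nonneg_of_polyP_add_even L hLe he hQ

lemma exists_polyP_succ_map_eq_zero (hL : ∀ P, PolyP n P ∨ PolyP (n - 1) P → 0 ≤ L P)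
    (hk : k + 2 ≤ n) (hQ : PolyP k Q) (hQ₀ : L Q = 0) :
    ∃ r : ℕ, PolyP (k + 1) ((X - C (r : ℝ)) * Q) ∧ L ((X - C (r : ℝ)) * Q) = 0 := by
  obtain ⟨e, he, he₀, hLe⟩ := exists_even_nonneg_of_le L hL (by omega : k ≤ n)
  obtain ⟨r, hR⟩ := hQ.exists_X_sub_C_mul
  have hXQ := map_X_mul_nonpos_of_polyP_add_even L hLe he (he₀ hk) hQ hQ₀
  have hR₀ := nonneg_of_polyP_of_le L hL (by omega) hR
  refine ⟨r, hR, ?_⟩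
  rw [map_X_sub_C_mul, hQ₀, mul_zero, sub_zero] at hR₀ ⊢
  exact le_antisymm hXQ hR₀

lemma map_X_pow_mul_eq_zero (hL : ∀ P, PolyP n P ∨ PolyP (n - 1) P → 0 ≤ L P) (i : ℕ) :
    ∀ {k Q}, PolyP k Q → L Q = 0 → k + i + 1 ≤ n → L (X ^ i * Q) = 0 := by
  induction i with
  | zero => intro k Q _ hQ₀ _; simpa using hQ₀
  | succ i ih =>
    intro k Q hQ hQ₀ hk
    obtain ⟨r, hR, hR₀⟩ := exists_polyP_succ_map_eq_zero L hL (by omega) hQ hQ₀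
    have hsplit : X ^ (i + 1) * Q = X ^ i * ((X - C (r : ℝ)) * Q) + (r : ℝ) • (X ^ i * Q) := by
      rw [smul_eq_C_mul]; ring
    rw [hsplit, map_add, map_smul, ih hR hR₀ (by omega), ih hQ hQ₀ (by omega), smul_zero,
      add_zero]

end Functional

theorem algebra_prop_general (n : ℕ) (m : ℕ → ℝ)
    (h : ∀ P, PolyP n P ∨ PolyP (n - 1) P → 0 ≤ Lf P m) :
    (∀ k, 1 ≤ k → k ≤ n → ∀ P, PolyP k P → 0 ≤ Lf P m) ∧
      ∀ k, 1 ≤ k → k ≤ n - 2 → ∀ Q, PolyP k Q → Lf Q m = 0 →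
        ∀ i, 1 ≤ i → i ≤ n - 1 - k → Lf (X ^ i * Q) m = 0 := by
  have hL : ∀ P, PolyP n P ∨ PolyP (n - 1) P → 0 ≤ lfLinearMap m P := by simpa using h
  refine ⟨fun k _ hk P hP => ?_, fun k _ hk Q hQ hQ₀ i hi hik => ?_⟩
  · simpa using nonneg_of_polyP_of_le _ hL hk hP
  · simpa using map_X_pow_mul_eq_zero _ hL i hQ (by simpa using hQ₀) (by omega)

/-- Proposition B.2: if `L_P(m) ≥ 0` for all `P ∈ 𝒫_n ∪ 𝒫_{n-1}`, then
`L_P(m) ≥ 0` for all `P ∈ 𝒫_k`, `1 ≤ k ≤ n`; and if `Q ∈ 𝒫_k` with `k ≤ n-2`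
has `L_Q(m) = 0`, then `L_{x^i Q}(m) = 0` for `1 ≤ i ≤ n-1-k`. -/
theorem algebra_prop (n : ℕ) (hn : 2 ≤ n) (m : ℕ → ℝ) (hm0 : m 0 = 1)
    (h : ∀ P, PolyP n P ∨ PolyP (n - 1) P → 0 ≤ Lf P m) :
    (∀ k, 1 ≤ k → k ≤ n → ∀ P, PolyP k P → 0 ≤ Lf P m) ∧
      ∀ k, 1 ≤ k → k ≤ n - 2 → ∀ Q, PolyP k Q → Lf Q m = 0 →
        ∀ i, 1 ≤ i → i ≤ n - 1 - k → Lf (X ^ i * Q) m = 0 :=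
  algebra_prop_general n m h
end
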